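/- Let R be a commutative ring, t ∈ R, l ≥ 1, and A = R[x,y]/(xy - t^l). For positive integers i, j with i + j = l, let E_{i,j} be the A-module with generators ξ₁, ξ₂ and relations t^j ξ₁ = x ξ₂ and t^i ξ₂ = y ξ₁. Then the A-linear dual Hom_A(E_{i,j}, A) is isomorphic to E_{j,i}. -/
import Mathlib


set_option synthInstance.maxHeartbeats 1000000
set_option maxHeartbeats 1000000

open MvPolynomial

namespace stmt10

variable (R : Type*) [CommRing R] (t : R) (l : ℕ)

/-- `A = R[x,y]/(xy - t^l)`, with `x = X 0`, `y = X 1`. -/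
noncomputable abbrev A := MvPolynomial (Fin 2) R ⧸
  Ideal.span {(X 0 * X 1 - C (t ^ l) : MvPolynomial (Fin 2) R)}

noncomputable def x : A R t l := Ideal.Quotient.mk _ (X 0)
noncomputable def y : A R t l := Ideal.Quotient.mk _ (X 1)
noncomputable def tA : A R t l := Ideal.Quotient.mk _ (C t)

/-- `E i j` is the `A`-module with generators `ξ₁, ξ₂` and relations
`t^j ξ₁ = x ξ₂` and `t^i ξ₂ = y ξ₁`, presented as a quotient of `A × A`
(`ξ₁ = (1,0)`, `ξ₂ = (0,1)`). -/
noncomputable def E (i j : ℕ) :=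
  (A R t l × A R t l) ⧸
    (Submodule.span (A R t l) {((tA R t l ^ j, -(x R t l)) : A R t l × A R t l),
      ((y R t l, -(tA R t l ^ i)) : A R t l × A R t l)})

noncomputable instance (i j : ℕ) : AddCommGroup (E R t l i j) :=
  Submodule.Quotient.addCommGroup _

noncomputable instance (i j : ℕ) : Module (A R t l) (E R t l i j) :=
  Submodule.Quotient.module _

/-! ### Auxiliary machinery -/

/-- regularity of `C a * X - C b` in `S[X]` for regular `a`. -/
theorem aux_poly_reg {S : Type*} [CommRing S] {a b : S}
    (ha : ∀ u v : S, a * u = a * v → u = v) (p : Polynomial S)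
    (hp : (Polynomial.C a * Polynomial.X - Polynomial.C b) * p = 0) : p = 0 := by
  by_contra hne
  have hd : p.coeff (p.natDegree + 1) = 0 :=
    Polynomial.coeff_eq_zero_of_natDegree_lt (by omega)
  have h1 : ((Polynomial.C a * Polynomial.X - Polynomial.C b) * p).coeff (p.natDegree + 1) = 0 := by
    rw [hp, Polynomial.coeff_zero]
  rw [sub_mul, Polynomial.coeff_sub, mul_assoc, Polynomial.coeff_C_mul, Polynomial.coeff_X_mul,
    Polynomial.coeff_C_mul, hd, mul_zero, sub_zero] at h1
  have h2 : a * p.coeff p.natDegree = a * 0 := by rw [h1, mul_zero]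
  exact hne (Polynomial.leadingCoeff_eq_zero.mp (ha _ _ h2))

/-- `X 0 * X 1 - C (t^l)` is a regular element of `R[x,y]`. -/
theorem freg (u v : MvPolynomial (Fin 2) R)
    (h : (X 0 * X 1 - C (t ^ l)) * u = (X 0 * X 1 - C (t ^ l)) * v) : u = v := by
  have h0 : (X 0 * X 1 - C (t ^ l) : MvPolynomial (Fin 2) R) * (u - v) = 0 := by
    rw [mul_sub, h, sub_self]
  have him : (finSuccEquiv R 1) ((X 0 * X 1 - C (t ^ l) : MvPolynomial (Fin 2) R)) *
      (finSuccEquiv R 1) (u - v) = 0 := by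
    rw [← map_mul, h0, map_zero]
  have hf : (finSuccEquiv R 1) ((X 0 * X 1 - C (t ^ l) : MvPolynomial (Fin 2) R)) =
      Polynomial.C (X 0) * Polynomial.X - Polynomial.C (C (t ^ l)) := by
    have h1 : (X 1 : MvPolynomial (Fin 2) R) = X ((0 : Fin 1).succ) := rfl
    have hC : (finSuccEquiv R 1) (C (t ^ l) : MvPolynomial (Fin 2) R)
        = Polynomial.C (C (t ^ l)) := by
      simp [finSuccEquiv_apply]
    rw [map_sub, map_mul, finSuccEquiv_X_zero, h1, finSuccEquiv_X_succ, hC]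
    ring
  rw [hf] at him
  have h2 : (finSuccEquiv R 1) (u - v) = 0 :=
    aux_poly_reg (fun a b hab => MvPolynomial.isRegular_X.left hab) _ him
  have h3 : u - v = 0 := (finSuccEquiv R 1).injective (by rw [h2, map_zero])
  exact sub_eq_zero.mp h3

/-- The quotient map, as a ring hom. -/
noncomputable def pA : MvPolynomial (Fin 2) R →+* A R t l :=
  Ideal.Quotient.mk (Ideal.span {(X 0 * X 1 - C (t ^ l) : MvPolynomial (Fin 2) R)})

theorem x_def : x R t l = pA R t l (X 0) := rfl
theorem y_def : y R t l = pA R t l (X 1) := rfl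
theorem tA_def : tA R t l = pA R t l (C t) := rfl

theorem pA_surjective : Function.Surjective (pA R t l) := Ideal.Quotient.mk_surjective

theorem pA_zero {w : MvPolynomial (Fin 2) R} (h : pA R t l w = 0) :
    ∃ c, w = (X 0 * X 1 - C (t ^ l)) * c :=
  Ideal.mem_span_singleton.mp (Ideal.Quotient.eq_zero_iff_mem.mp h)

theorem pA_f : pA R t l (X 0 * X 1 - C (t ^ l)) = 0 :=
  Ideal.Quotient.eq_zero_iff_mem.mpr (Ideal.subset_span rfl)

theorem x_mul_y (i j : ℕ) (hij : i + j = l) :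
    x R t l * y R t l = tA R t l ^ i * tA R t l ^ j := by
  subst hij
  have h0 := pA_f R t (i + j)
  have hCt : (C (t ^ (i + j)) : MvPolynomial (Fin 2) R) = C t ^ (i + j) := map_pow C t _
  simp only [hCt, map_sub, map_mul, map_pow] at h0
  rw [sub_eq_zero] at h0
  rw [x_def, y_def, tA_def, h0, pow_add]

theorem core1 (i j : ℕ) (hij : i + j = l) (a b : A R t l)
    (h1 : tA R t l ^ j * a = x R t l * b) (h2 : y R t l * a = tA R t l ^ i * b) :
    ∃ p q : A R t l,
      a = x R t l * p + tA R t l ^ i * q ∧ b = tA R t l ^ j * p + y R t l * q := by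
  subst hij
  obtain ⟨u, rfl⟩ := pA_surjective R t (i + j) a
  obtain ⟨v, rfl⟩ := pA_surjective R t (i + j) b
  rw [x_def, tA_def] at h1
  rw [y_def, tA_def] at h2
  have e1 : pA R t (i + j) (C t ^ j * u - X 0 * v) = 0 := by
    simp only [map_sub, map_mul, map_pow]
    rw [sub_eq_zero]; exact h1
  have e2 : pA R t (i + j) (X 1 * u - C t ^ i * v) = 0 := by
    simp only [map_sub, map_mul, map_pow]
    rw [sub_eq_zero]; exact h2
  obtain ⟨c, hc⟩ := pA_zero R t (i + j) e1
  obtain ⟨d, hd⟩ := pA_zero R t (i + j) e2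
  have hC : (C (t ^ (i + j)) : MvPolynomial (Fin 2) R) = C t ^ i * C t ^ j := by
    rw [← pow_add, map_pow]
  have keyu : (X 0 * X 1 - C (t ^ (i + j)) : MvPolynomial (Fin 2) R) * u =
      (X 0 * X 1 - C (t ^ (i + j))) * (X 0 * d - C t ^ i * c) := by
    rw [hC] at hc hd ⊢
    linear_combination X 0 * hd - C t ^ i * hc
  have keyv : (X 0 * X 1 - C (t ^ (i + j)) : MvPolynomial (Fin 2) R) * v =
      (X 0 * X 1 - C (t ^ (i + j))) * (C t ^ j * d - X 1 * c) := by
    rw [hC] at hc hd ⊢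
    linear_combination C t ^ j * hd - X 1 * hc
  have hu := freg R t (i + j) _ _ keyu
  have hv := freg R t (i + j) _ _ keyv
  refine ⟨pA R t (i + j) d, -pA R t (i + j) c, ?_, ?_⟩
  · rw [x_def, tA_def, hu]; simp only [map_sub, map_mul, map_pow]; ring
  · rw [y_def, tA_def, hv]; simp only [map_sub, map_mul, map_pow]; ring

theorem core2 (i j : ℕ) (hij : i + j = l) (p q : A R t l)
    (h1 : x R t l * p + tA R t l ^ i * q = 0)
    (h2 : tA R t l ^ j * p + y R t l * q = 0) :
    ∃ c d : A R t l,
      p = y R t l * c - tA R t l ^ i * d ∧ q = x R t l * d - tA R t l ^ j * c := by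
  subst hij
  obtain ⟨u, rfl⟩ := pA_surjective R t (i + j) p
  obtain ⟨v, rfl⟩ := pA_surjective R t (i + j) q
  rw [x_def, tA_def] at h1
  rw [y_def, tA_def] at h2
  have e1 : pA R t (i + j) (X 0 * u + C t ^ i * v) = 0 := by
    simp only [map_add, map_mul, map_pow]; exact h1
  have e2 : pA R t (i + j) (C t ^ j * u + X 1 * v) = 0 := by
    simp only [map_add, map_mul, map_pow]; exact h2
  obtain ⟨c, hc⟩ := pA_zero R t (i + j) e1
  obtain ⟨d, hd⟩ := pA_zero R t (i + j) e2
  have hC : (C (t ^ (i + j)) : MvPolynomial (Fin 2) R) = C t ^ i * C t ^ j := by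
    rw [← pow_add, map_pow]
  have keyu : (X 0 * X 1 - C (t ^ (i + j)) : MvPolynomial (Fin 2) R) * u =
      (X 0 * X 1 - C (t ^ (i + j))) * (X 1 * c - C t ^ i * d) := by
    rw [hC] at hc hd ⊢
    linear_combination X 1 * hc - C t ^ i * hd
  have keyv : (X 0 * X 1 - C (t ^ (i + j)) : MvPolynomial (Fin 2) R) * v =
      (X 0 * X 1 - C (t ^ (i + j))) * (X 0 * d - C t ^ j * c) := by
    rw [hC] at hc hd ⊢
    linear_combination X 0 * hd - C t ^ j * hc
  have hu := freg R t (i + j) _ _ keyu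
  have hv := freg R t (i + j) _ _ keyv
  refine ⟨pA R t (i + j) c, pA R t (i + j) d, ?_, ?_⟩
  · rw [y_def, tA_def, hu]; simp only [map_sub, map_mul, map_pow]
  · rw [x_def, tA_def, hv]; simp only [map_sub, map_mul, map_pow]

/-- The relation submodule. -/
noncomputable def Srel (i j : ℕ) : Submodule (A R t l) (A R t l × A R t l) :=
  Submodule.span (A R t l) {((tA R t l ^ j, -(x R t l)) : A R t l × A R t l),
    ((y R t l, -(tA R t l ^ i)) : A R t l × A R t l)}

/-- The bilinear pairing implementing the duality. -/
noncomputable def bil (i j : ℕ) :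
    (A R t l × A R t l) →ₗ[A R t l] (A R t l × A R t l) →ₗ[A R t l] A R t l :=
  LinearMap.mk₂ (A R t l)
    (fun v w => (x R t l * v.1 + tA R t l ^ i * v.2) * w.1 +
      (tA R t l ^ j * v.1 + y R t l * v.2) * w.2)
    (fun m₁ m₂ n => by simp only [Prod.fst_add, Prod.snd_add]; ring)
    (fun c m n => by simp only [Prod.smul_fst, Prod.smul_snd, smul_eq_mul]; ring)
    (fun m n₁ n₂ => by simp only [Prod.fst_add, Prod.snd_add]; ring)
    (fun c m n => by simp only [Prod.smul_fst, Prod.smul_snd, smul_eq_mul]; ring)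

theorem bil_apply (i j : ℕ) (v w : A R t l × A R t l) :
    bil R t l i j v w = (x R t l * v.1 + tA R t l ^ i * v.2) * w.1 +
      (tA R t l ^ j * v.1 + y R t l * v.2) * w.2 := rfl

theorem bil_ker (i j : ℕ) (hij : i + j = l) (v : A R t l × A R t l) :
    Srel R t l i j ≤ LinearMap.ker (bil R t l i j v) := by
  have hxy := x_mul_y R t l i j hij
  rw [Srel, Submodule.span_le]
  intro w hw
  simp only [Set.mem_insert_iff, Set.mem_singleton_iff] at hw
  rcases hw with rfl | rfl <;>
    simp only [SetLike.mem_coe, LinearMap.mem_ker, bil_apply]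
  · linear_combination (-v.2) * hxy
  · linear_combination v.1 * hxy

/-- The map `(p,q) ↦ (functional on `E i j`)`. -/
noncomputable def theta (i j : ℕ) (hij : i + j = l) :
    (A R t l × A R t l) →ₗ[A R t l]
      Module.Dual (A R t l) ((A R t l × A R t l) ⧸ Srel R t l i j) where
  toFun v := (Srel R t l i j).liftQ (bil R t l i j v) (bil_ker R t l i j hij v)
  map_add' v w := by
    refine Submodule.linearMap_qext _ (LinearMap.ext fun u => ?_)
    simp only [LinearMap.comp_apply, Submodule.mkQ_apply, Submodule.liftQ_apply,
      LinearMap.add_apply, map_add]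
  map_smul' c v := by
    refine Submodule.linearMap_qext _ (LinearMap.ext fun u => ?_)
    simp only [LinearMap.comp_apply, Submodule.mkQ_apply, Submodule.liftQ_apply,
      LinearMap.smul_apply, map_smul, RingHom.id_apply]

theorem theta_apply (i j : ℕ) (hij : i + j = l) (v w : A R t l × A R t l) :
    theta R t l i j hij v (Submodule.Quotient.mk w) = bil R t l i j v w := rfl

theorem theta_ker (i j : ℕ) (hij : i + j = l) :
    Srel R t l j i ≤ LinearMap.ker (theta R t l i j hij) := by
  have hxy := x_mul_y R t l i j hij
  rw [Srel, Submodule.span_le]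
  intro w hw
  simp only [Set.mem_insert_iff, Set.mem_singleton_iff] at hw
  have key : ∀ v : A R t l × A R t l,
      (x R t l * v.1 + tA R t l ^ i * v.2 = 0) →
      (tA R t l ^ j * v.1 + y R t l * v.2 = 0) →
      v ∈ LinearMap.ker (theta R t l i j hij) := by
    intro v hv1 hv2
    rw [LinearMap.mem_ker]
    refine Submodule.linearMap_qext _ (LinearMap.ext fun u => ?_)
    simp only [LinearMap.comp_apply, Submodule.mkQ_apply, LinearMap.zero_apply,
      LinearMap.zero_comp]
    rw [theta_apply, bil_apply, hv1, hv2]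
    ring
  rcases hw with rfl | rfl
  · refine key _ ?_ ?_ <;> [linear_combination (0 : A R t l); linear_combination (-1 : A R t l) * hxy]
  · refine key _ ?_ ?_ <;> [linear_combination hxy; linear_combination (0 : A R t l)]

/-- The candidate isomorphism `E j i → Dual (E i j)`. -/
noncomputable def psi (i j : ℕ) (hij : i + j = l) :
    ((A R t l × A R t l) ⧸ Srel R t l j i) →ₗ[A R t l]
      Module.Dual (A R t l) ((A R t l × A R t l) ⧸ Srel R t l i j) :=
  (Srel R t l j i).liftQ (theta R t l i j hij) (theta_ker R t l i j hij)

/-- for `i + j = l`, `i, j > 0`, the `A`-linear dual of `E_{i,j}` is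
isomorphic to `E_{j,i}`. -/
theorem stmt10 (i j : ℕ) (hi : 0 < i) (hj : 0 < j) (hij : i + j = l) :
    Nonempty (Module.Dual (A R t l) (E R t l i j) ≃ₗ[A R t l] E R t l j i) := by
  show Nonempty (Module.Dual (A R t l) ((A R t l × A R t l) ⧸ Srel R t l i j)
    ≃ₗ[A R t l] ((A R t l × A R t l) ⧸ Srel R t l j i))
  have hinj : Function.Injective (psi R t l i j hij) := by
    rw [injective_iff_map_eq_zero]
    intro e he
    obtain ⟨⟨p, q⟩, rfl⟩ := Submodule.Quotient.mk_surjective _ e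
    have h1 := DFunLike.congr_fun he (Submodule.Quotient.mk ((1 : A R t l), (0 : A R t l)))
    have h2 := DFunLike.congr_fun he (Submodule.Quotient.mk ((0 : A R t l), (1 : A R t l)))
    rw [psi, Submodule.liftQ_apply, theta_apply, bil_apply, LinearMap.zero_apply] at h1 h2
    simp only [mul_one, mul_zero, add_zero, zero_add] at h1 h2
    obtain ⟨c, d, hp, hq⟩ := core2 R t l i j hij p q h1 h2
    rw [Submodule.Quotient.mk_eq_zero]
    rw [Srel]
    refine Submodule.mem_span_pair.mpr ⟨-d, c, ?_⟩
    simp only [Prod.smul_mk, smul_eq_mul, Prod.mk_add_mk, Prod.mk.injEq]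
    constructor
    · linear_combination -hp
    · linear_combination -hq
  have hsurj : Function.Surjective (psi R t l i j hij) := by
    intro φ
    set α := φ (Submodule.Quotient.mk ((1 : A R t l), (0 : A R t l))) with hα
    set β := φ (Submodule.Quotient.mk ((0 : A R t l), (1 : A R t l))) with hβ
    have hmem1 : ((tA R t l ^ j, -(x R t l)) : A R t l × A R t l) ∈ Srel R t l i j :=
      Submodule.subset_span (Set.mem_insert _ _)
    have hmem2 : ((y R t l, -(tA R t l ^ i)) : A R t l × A R t l) ∈ Srel R t l i j :=
      Submodule.subset_span (Set.mem_insert_iff.mpr (Or.inr rfl))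
    have hgen1 : φ (Submodule.Quotient.mk ((tA R t l ^ j, -(x R t l)) : A R t l × A R t l)) = 0 := by
      rw [(Submodule.Quotient.mk_eq_zero _).mpr hmem1, map_zero]
    have hgen2 : φ (Submodule.Quotient.mk ((y R t l, -(tA R t l ^ i)) : A R t l × A R t l)) = 0 := by
      rw [(Submodule.Quotient.mk_eq_zero _).mpr hmem2, map_zero]
    have hv1 : ((tA R t l ^ j, -(x R t l)) : A R t l × A R t l) =
        tA R t l ^ j • ((1 : A R t l), (0 : A R t l)) +
          (-(x R t l)) • ((0 : A R t l), (1 : A R t l)) := by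
      simp only [Prod.smul_mk, smul_eq_mul, Prod.mk_add_mk, mul_one, mul_zero, add_zero, zero_add]
    have hv2 : ((y R t l, -(tA R t l ^ i)) : A R t l × A R t l) =
        y R t l • ((1 : A R t l), (0 : A R t l)) +
          (-(tA R t l ^ i)) • ((0 : A R t l), (1 : A R t l)) := by
      simp only [Prod.smul_mk, smul_eq_mul, Prod.mk_add_mk, mul_one, mul_zero, add_zero, zero_add]
    rw [hv1, Submodule.Quotient.mk_add, Submodule.Quotient.mk_smul, Submodule.Quotient.mk_smul,
      map_add, map_smul, map_smul, ← hα, ← hβ, smul_eq_mul, smul_eq_mul] at hgen1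
    rw [hv2, Submodule.Quotient.mk_add, Submodule.Quotient.mk_smul, Submodule.Quotient.mk_smul,
      map_add, map_smul, map_smul, ← hα, ← hβ, smul_eq_mul, smul_eq_mul] at hgen2
    have h1 : tA R t l ^ j * α = x R t l * β := by linear_combination hgen1
    have h2 : y R t l * α = tA R t l ^ i * β := by linear_combination hgen2
    obtain ⟨p, q, hp, hq⟩ := core1 R t l i j hij α β h1 h2
    refine ⟨Submodule.Quotient.mk (p, q), ?_⟩
    refine LinearMap.ext fun e => ?_
    obtain ⟨⟨a, b⟩, rfl⟩ := Submodule.Quotient.mk_surjective _ e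
    rw [psi, Submodule.liftQ_apply, theta_apply, bil_apply]
    have hab : ((a, b) : A R t l × A R t l) =
        a • ((1 : A R t l), (0 : A R t l)) + b • ((0 : A R t l), (1 : A R t l)) := by
      simp only [Prod.smul_mk, smul_eq_mul, Prod.mk_add_mk, mul_one, mul_zero, add_zero, zero_add]
    rw [hab, Submodule.Quotient.mk_add, Submodule.Quotient.mk_smul, Submodule.Quotient.mk_smul,
      map_add, map_smul, map_smul, ← hα, ← hβ, smul_eq_mul, smul_eq_mul]
    simp only [Prod.smul_mk, Prod.mk_add_mk, smul_eq_mul, Prod.fst,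
      Prod.snd,
      mul_one, mul_zero, add_zero, zero_add]
    linear_combination (-a) * hp - b * hq
  exact ⟨(LinearEquiv.ofBijective (psi R t l i j hij) ⟨hinj, hsurj⟩).symm⟩

end stmt10
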